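/- Let O ⊆ ℝ^d be a bounded Borel set and ρ a finite measure on O absolutely continuous with density in L¹ ∩ L∞. Suppose the set-valued map K satisfies (H1)–(H2) with constant C₀, w is Lipschitz, and ∇φ is bounded and Lipschitz. Let ε, η ∈ (0,1/2], let φ_ε, φ_η be mollifiers at scales ε, η, and define the mollified velocity field V^{ε,η}[ρ](x) := ∫_O ∇φ(x − y) 1^{ε,η}_{K(w(x))}(y − x) ρ(dy), where 1^{ε,η}_{K(x')}(z) := ∫∫ 1_{K(x'−y')}(z−y) φ_ε(y) φ_η(y') dy dy'. Then there exists a constant C > 0, depending only on C₀, ‖∇φ‖_{W^{1,∞}} and ‖w‖_Lip but independent of ε, η, ρ, such that for every coordinate i ∈ {1,…,d}, every x ∈ ℝ^d and every h with 0 < h ≤ 1, the i-th component satisfies |(V^{ε,η}[ρ])_i(x + h e_i) − (V^{ε,η}[ρ])_i(x)| ≤ C h ‖ρ‖_{L¹∩L∞}, where e_i is the i-th standard basis vector. -/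

import Mathlib

open MeasureTheory Metric Set Pointwise

set_option maxHeartbeats 1600000
open scoped ENNReal NNReal

noncomputable section

/-- Euclidean space `ℝ^d`. -/
abbrev Euc (d : ℕ) := EuclideanSpace ℝ (Fin d)

/-- The `ε`-boundary of a set `A ⊆ ℝ^d`: `∂^ε A = {x + y : x ∈ ∂A, ‖y‖ ≤ ε}`. -/
def epsBdry {d : ℕ} (A : Set (Euc d)) (ε : ℝ) : Set (Euc d) :=
  frontier A + Metric.closedBall 0 ε

/-- The `ε`-enlargement `A^{ε,+} = A ∪ ∂^ε A`. -/
def enl {d : ℕ} (A : Set (Euc d)) (ε : ℝ) : Set (Euc d) := A ∪ epsBdry A ε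

/-- Assumptions (H1)-(H2) on the set-valued map `K` with constant `C₀`, enveloping
compact set `𝒦`, and generalized boundary `Θ`. -/
structure HypK {d : ℕ} (K Θ : Euc d → Set (Euc d)) (C₀ : ℝ) (𝒦 : Set (Euc d)) : Prop where
  compact_env : IsCompact 𝒦
  compact : ∀ x, IsCompact (K x)
  nonempty : ∀ x, (K x).Nonempty
  subset_env : ∀ x, K x ⊆ 𝒦
  closed_Θ : ∀ x, IsClosed (Θ x)
  h2i : ∀ x, frontier (K x) ⊆ Θ x
  h2ii : ∀ x, ∀ ε : ℝ, 0 < ε → ε < 1 → volume (enl (Θ x) ε) ≤ ENNReal.ofReal (C₀ * ε)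
  h2iii : ∀ x x', symmDiff (K x) (K x') ⊆ enl (Θ x) (C₀ * ‖x - x'‖)
  h2iv : ∀ x x', Θ x ⊆ enl (Θ x') (C₀ * ‖x - x'‖)

/-- The doubly mollified indicator
`1^{ε,η}_{K(x')}(x) = ∫∫ 1_{K(x'−y')}(x−y) φε(y) φη(y') dy dy'`. -/
def mollInd2 {d : ℕ} (φε φη : Euc d → ℝ) (K : Euc d → Set (Euc d)) (x' x : Euc d) : ℝ :=
  ∫ y', (∫ y, (K (x' - y')).indicator (fun _ => (1 : ℝ)) (x - y) * φε y) * φη y'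

/-- The mollified velocity field
`V^{ε,η}[ρ](x) = ∫_O ∇φ(x − y) 1^{ε,η}_{K(w(x))}(y − x) ρ(dy)`. -/
def velMoll {d : ℕ} (gradφ : Euc d → Euc d) (K : Euc d → Set (Euc d)) (w : Euc d → Euc d)
    (φε φη : Euc d → ℝ) (O : Set (Euc d)) (ρ : Measure (Euc d)) (x : Euc d) : Euc d :=
  ∫ y in O, (mollInd2 φε φη K (w x) (y - x)) • gradφ (x - y) ∂ρ

namespace MollAux
variable {d : ℕ}

/-- Segment lemma: between a point of `A` and a point outside `A` there is a frontier point
close to both. -/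
lemma exists_frontier_between {A : Set (Euc d)} {a b : Euc d} (ha : a ∈ A) (hb : b ∉ A) :
    ∃ p ∈ frontier A, ‖a - p‖ ≤ ‖b - a‖ ∧ ‖b - p‖ ≤ ‖b - a‖ := by
  set u : ℝ → Euc d := fun t => a + t • (b - a) with hu
  have hucont : Continuous u := by continuity
  set T : Set ℝ := Icc (0:ℝ) 1 ∩ u ⁻¹' (closure A) with hT
  have hTc : IsCompact T := (isCompact_Icc).inter_right (isClosed_closure.preimage hucont)
  have hT0 : (0:ℝ) ∈ T := by
    constructor
    · exact ⟨le_refl 0, zero_le_one⟩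
    · simp only [mem_preimage, hu]
      simpa using subset_closure ha
  set t₀ := sSup T with ht₀
  have ht₀T : t₀ ∈ T := hTc.sSup_mem ⟨0, hT0⟩
  have ht₀le : t₀ ≤ 1 := ht₀T.1.2
  have ht₀ge : 0 ≤ t₀ := ht₀T.1.1
  refine ⟨u t₀, ?_, ?_, ?_⟩
  · -- frontier
    rw [frontier_eq_closure_inter_closure]
    refine ⟨ht₀T.2, ?_⟩
    -- u t₀ ∈ closure Aᶜ
    rcases eq_or_lt_of_le ht₀le with h1 | h1
    · have : u t₀ = b := by simp [hu, h1]
      rw [this]; exact subset_closure hb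
    · -- points slightly beyond t₀ are outside closure A hence in Aᶜ
      have hseq : Filter.Tendsto (fun n : ℕ => u (t₀ + (1 - t₀) / (n + 2))) Filter.atTop
          (nhds (u t₀)) := by
        apply hucont.continuousAt.tendsto.comp
        have : Filter.Tendsto (fun n : ℕ => (1 - t₀) / (n + 2)) Filter.atTop (nhds 0) := by
          apply Filter.Tendsto.div_atTop tendsto_const_nhds
          exact Filter.tendsto_atTop_add_const_right _ 2 (tendsto_natCast_atTop_atTop)
        have := this.const_add t₀
        simpa using this
      apply mem_closure_of_tendsto hseq
      filter_upwards [] with n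
      have hlt : t₀ < t₀ + (1 - t₀) / (n + 2) := by
        have : (0:ℝ) < (1 - t₀) / (n + 2) := by
          apply div_pos (by linarith) (by positivity)
        linarith
      have hle1 : t₀ + (1 - t₀) / (n + 2) ≤ 1 := by
        have h2 : (1 - t₀) / (n + 2) ≤ (1 - t₀) / 2 := by
          apply div_le_div_of_nonneg_left (by linarith) (by norm_num)
          · have hn : (0:ℝ) ≤ (n:ℝ) := Nat.cast_nonneg n
            linarith
        linarith
      have : t₀ + (1 - t₀) / (n + 2) ∉ T := fun hmem => absurd (le_csSup hTc.bddAbove hmem) (not_le.2 hlt)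
      have hnot : u (t₀ + (1 - t₀) / (n + 2)) ∉ closure A := by
        intro hc
        exact this ⟨⟨by linarith, hle1⟩, hc⟩
      simp only [mem_compl_iff]
      exact fun hA => hnot (subset_closure hA)
  · -- ‖a - u t₀‖ ≤ ‖b - a‖
    have : a - u t₀ = (-t₀) • (b - a) := by simp only [hu]; module
    rw [this, norm_smul]
    have : ‖(-t₀ : ℝ)‖ ≤ 1 := by rw [norm_neg, Real.norm_of_nonneg ht₀ge]; exact ht₀le
    nlinarith [norm_nonneg (b - a)]
  · have : b - u t₀ = (1 - t₀) • (b - a) := by simp only [hu]; module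
    rw [this, norm_smul]
    have : ‖(1 - t₀ : ℝ)‖ ≤ 1 := by rw [Real.norm_of_nonneg (by linarith)]; linarith
    nlinarith [norm_nonneg (b - a)]

lemma mem_frontier_add_ball_left {A : Set (Euc d)} {a b : Euc d} (ha : a ∈ A) (hb : b ∉ A)
    {r : ℝ} (hr : ‖b - a‖ ≤ r) : b ∈ frontier A + closedBall 0 r := by
  obtain ⟨p, hp, -, hbp⟩ := exists_frontier_between ha hb
  exact ⟨p, hp, b - p, by simpa [mem_closedBall, dist_eq_norm] using hbp.trans hr, by module⟩

lemma mem_frontier_add_ball_right {A : Set (Euc d)} {a b : Euc d} (ha : a ∈ A) (hb : b ∉ A)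
    {r : ℝ} (hr : ‖b - a‖ ≤ r) : a ∈ frontier A + closedBall 0 r := by
  obtain ⟨p, hp, hap, -⟩ := exists_frontier_between ha hb
  exact ⟨p, hp, a - p, by simpa [mem_closedBall, dist_eq_norm] using hap.trans hr, by module⟩

/-- `A + closedBall 0 r ⊆ enl A r` -/
lemma add_ball_subset_enl (A : Set (Euc d)) {r : ℝ} :
    A + closedBall 0 r ⊆ enl A r := by
  rintro z ⟨a, ha, v, hv, rfl⟩
  by_cases hz : a + v ∈ A
  · exact Or.inl hz
  · refine Or.inr ?_
    have : ‖(a + v) - a‖ ≤ r := by simpa [mem_closedBall, dist_eq_norm] using hv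
    exact mem_frontier_add_ball_left ha hz this

lemma enl_mono (A : Set (Euc d)) {s t : ℝ} (h : s ≤ t) : enl A s ⊆ enl A t := by
  apply union_subset_union_right
  exact Set.add_subset_add_left (closedBall_subset_closedBall h)

/-- symmDiff of a translate-preimage with the set itself lies in the frontier enlargement. -/
lemma symmDiff_preimage_subset (A : Set (Euc d)) (δ : Euc d) :
    symmDiff ((fun z => z - δ) ⁻¹' A) A ⊆ frontier A + closedBall 0 ‖δ‖ := by
  intro z hz
  rw [Set.mem_symmDiff] at hz
  rcases hz with ⟨hzP, hzA⟩ | ⟨hzA, hzP⟩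
  · -- z - δ ∈ A, z ∉ A
    have hzP' : z - δ ∈ A := hzP
    have heq0 : z - (z - δ) = δ := by module
    have : ‖z - (z - δ)‖ ≤ ‖δ‖ := by rw [heq0]
    exact mem_frontier_add_ball_left hzP' hzA this
  · -- z ∈ A, z - δ ∉ A
    have hzP' : z - δ ∉ A := hzP
    have heq : (z - δ) - z = -δ := by module
    have : ‖(z - δ) - z‖ ≤ ‖δ‖ := by rw [heq, norm_neg]
    exact mem_frontier_add_ball_right hzA hzP' this


section Vol
variable {d : ℕ} {K Θ : Euc d → Set (Euc d)} {C₀ : ℝ} {𝒦 : Set (Euc d)}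

/-- Uniform linear bound for the volume of enlargements of `Θ x`, valid on `[0, R]`. -/
lemma vol_enl_le (hyp : HypK K Θ C₀ 𝒦) (hC₀ : 0 < C₀) (R : ℝ) (hR : 1 ≤ R) :
    ∃ C₃ > 0, ∀ (x : Euc d) (r : ℝ), 0 ≤ r → r ≤ R →
      volume (enl (Θ x) r) ≤ ENNReal.ofReal (C₃ * r) := by
  -- finite cover of the ball of radius R by balls of radius 1/4
  obtain ⟨F, hF⟩ : ∃ F : Finset (Euc d), closedBall (0 : Euc d) R ⊆ ⋃ v ∈ F, ball v (1/4) := by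
    have hcomp : IsCompact (closedBall (0 : Euc d) R) := isCompact_closedBall _ _
    have hcover : closedBall (0 : Euc d) R ⊆ ⋃ v : Euc d, ball v (1/4) := by
      intro u _; exact mem_iUnion.2 ⟨u, by simp⟩
    obtain ⟨t, ht⟩ := hcomp.elim_finite_subcover (fun v : Euc d => ball v (1/4))
      (fun v => isOpen_ball) hcover
    exact ⟨t, ht⟩
  set C₂ : ℝ := (F.card + 1) * (C₀ / 2) with hC₂
  have hC₂pos : 0 < C₂ := by positivity
  refine ⟨max C₀ C₂, lt_max_of_lt_left hC₀, ?_⟩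
  intro x r hr0 hrR
  have hhalf := hyp.h2ii x (1/2) (by norm_num) (by norm_num)
  rcases eq_or_lt_of_le hr0 with hr0' | hr0'
  · -- r = 0 : measure is 0
    have hzero : volume (enl (Θ x) r) = 0 := by
      have hle : ∀ n : ℕ, volume (enl (Θ x) r) ≤ ENNReal.ofReal (C₀ * (1 / (n + 2))) := by
        intro n
        have h1 : (0:ℝ) < 1 / (n + 2) := by positivity
        have h2 : (1:ℝ) / (n + 2) < 1 := by
          rw [div_lt_one (by positivity)]
          have : (0:ℝ) ≤ (n:ℝ) := Nat.cast_nonneg n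
          linarith
        refine le_trans (measure_mono (enl_mono _ ?_)) (hyp.h2ii x _ h1 h2)
        rw [← hr0']; exact le_of_lt h1
      have htend : Filter.Tendsto (fun n : ℕ => ENNReal.ofReal (C₀ * (1 / (n + 2))))
          Filter.atTop (nhds 0) := by
        rw [show (0 : ENNReal) = ENNReal.ofReal 0 by simp]
        apply ENNReal.tendsto_ofReal
        have : Filter.Tendsto (fun n : ℕ => 1 / ((n:ℝ) + 2)) Filter.atTop (nhds 0) := by
          apply Filter.Tendsto.div_atTop tendsto_const_nhds
          exact Filter.tendsto_atTop_add_const_right _ 2 tendsto_natCast_atTop_atTop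
        simpa using this.const_mul C₀
      have := ge_of_tendsto htend (Filter.Eventually.of_forall hle)
      exact le_antisymm (by simpa using this) zero_le
    rw [hzero]; exact zero_le
  rcases lt_or_ge r 1 with hlt | hge
  · -- 0 < r < 1
    refine le_trans (hyp.h2ii x r hr0' hlt) (ENNReal.ofReal_le_ofReal ?_)
    exact mul_le_mul_of_nonneg_right (le_max_left _ _) hr0
  · -- 1 ≤ r ≤ R : covering argument
    have hsub : enl (Θ x) r ⊆ enl (Θ x) (1/2) ∪ ⋃ v ∈ F, (fun z => z - v) ⁻¹' (epsBdry (Θ x) (1/4)) := by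
      rintro z (hz | hz)
      · exact Or.inl (Or.inl hz)
      · rcases hz with ⟨p, hp, u, hu, rfl⟩
        have huR : u ∈ closedBall (0 : Euc d) R :=
          closedBall_subset_closedBall hrR hu
        obtain ⟨v, hvF, hv⟩ := by
          have := hF huR
          simpa only [mem_iUnion, exists_prop] using this
        refine Or.inr (mem_iUnion.2 ⟨v, mem_iUnion.2 ⟨hvF, ?_⟩⟩)
        show p + u - v ∈ epsBdry (Θ x) (1/4)
        refine ⟨p, hp, u - v, ?_, by module⟩
        have : ‖u - v‖ < 1/4 := by
          have := mem_ball.1 hv; rwa [dist_eq_norm] at this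
        simp only [mem_closedBall, dist_eq_norm, sub_zero]
        exact le_of_lt this
    have hbd : volume (enl (Θ x) r) ≤
        volume (enl (Θ x) (1/2)) + ∑ v ∈ F, volume ((fun z => z - v) ⁻¹' (epsBdry (Θ x) (1/4))) := by
      refine le_trans (measure_mono hsub) ?_
      refine le_trans (measure_union_le _ _) ?_
      gcongr
      exact measure_biUnion_finset_le F _
    have hquarter : volume (epsBdry (Θ x) (1/4)) ≤ ENNReal.ofReal (C₀ / 2) := by
      refine le_trans (measure_mono ?_) (by simpa [div_eq_mul_inv, mul_comm] using hhalf)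
      intro z hz; exact Or.inr (by exact (Set.add_subset_add_left
        (closedBall_subset_closedBall (by norm_num))) hz)
    have htrans : ∀ v : Euc d, volume ((fun z => z - v) ⁻¹' (epsBdry (Θ x) (1/4)))
        = volume (epsBdry (Θ x) (1/4)) := by
      intro v
      have : (fun z : Euc d => z - v) = (fun z : Euc d => z + (-v)) := by
        funext z; rw [sub_eq_add_neg]
      rw [this]
      exact measure_preimage_add_right volume (-v) _
    have hhalf' : volume (enl (Θ x) (1/2)) ≤ ENNReal.ofReal (C₀ / 2) := by
      refine le_trans hhalf (by rw [mul_one_div])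
    calc volume (enl (Θ x) r)
        ≤ ENNReal.ofReal (C₀ / 2) + ∑ v ∈ F, ENNReal.ofReal (C₀ / 2) := by
          refine le_trans hbd (add_le_add hhalf' ?_)
          refine Finset.sum_le_sum fun v hv => ?_
          rw [htrans v]; exact hquarter
      _ = ENNReal.ofReal (C₀ / 2) + F.card * ENNReal.ofReal (C₀ / 2) := by
          rw [Finset.sum_const, nsmul_eq_mul]
      _ ≤ ENNReal.ofReal (C₂) := by
          rw [hC₂]
          rw [ENNReal.ofReal_mul (by positivity)]
          have h1 : ENNReal.ofReal ((F.card : ℝ) + 1) = (F.card : ENNReal) + 1 := by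
            rw [ENNReal.ofReal_add (by positivity) (by norm_num)]
            simp
          rw [h1, add_mul, one_mul, add_comm]
      _ ≤ ENNReal.ofReal (max C₀ C₂ * r) := by
          apply ENNReal.ofReal_le_ofReal
          calc C₂ = C₂ * 1 := by ring
            _ ≤ max C₀ C₂ * r := by
              apply mul_le_mul (le_max_right _ _) hge (by norm_num) (le_of_lt (lt_of_lt_of_le hC₀ (le_max_left _ _)))

lemma vol_symmDiff_K (hyp : HypK K Θ C₀ 𝒦) (hC₀ : 0 < C₀) {C₃ R : ℝ} (hR : 1 ≤ R)
    (hC₃ : ∀ (x : Euc d) (r : ℝ), 0 ≤ r → r ≤ R → volume (enl (Θ x) r) ≤ ENNReal.ofReal (C₃ * r))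
    (b b' : Euc d) {r : ℝ} (hr : C₀ * ‖b - b'‖ ≤ r) (hrR : r ≤ R) :
    volume (symmDiff (K b) (K b')) ≤ ENNReal.ofReal (C₃ * r) := by
  have h0 : (0:ℝ) ≤ r := le_trans (by positivity) hr
  refine le_trans (measure_mono ?_) (hC₃ b r h0 hrR)
  exact le_trans (hyp.h2iii b b') (enl_mono _ hr)

end Vol


section Meas
variable {d : ℕ} {K Θ : Euc d → Set (Euc d)} {C₀ : ℝ} {𝒦 : Set (Euc d)}

/-- inner mollified indicator -/
def gfun (K : Euc d → Set (Euc d)) (φ : Euc d → ℝ) (a y' z : Euc d) : ℝ :=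
  ∫ y, (K (a - y')).indicator (fun _ => (1 : ℝ)) (z - y) * φ y

lemma indicator_le_one (S : Set (Euc d)) (u : Euc d) :
    S.indicator (fun _ => (1:ℝ)) u ≤ 1 := by
  by_cases h : u ∈ S <;> simp [Set.indicator_apply, h]

lemma indicator_nonneg' (S : Set (Euc d)) (u : Euc d) :
    0 ≤ S.indicator (fun _ => (1:ℝ)) u := by
  by_cases h : u ∈ S <;> simp [Set.indicator_apply, h]

lemma abs_indicator_sub_le (S T : Set (Euc d)) (u : Euc d) :
    |S.indicator (fun _ => (1:ℝ)) u - T.indicator (fun _ => (1:ℝ)) u|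
      ≤ (symmDiff S T).indicator (fun _ => (1:ℝ)) u := by
  by_cases hS : u ∈ S <;> by_cases hT : u ∈ T <;>
    simp [Set.indicator_apply, hS, hT, Set.mem_symmDiff]

lemma meas_indicator_comp (S : Set (Euc d)) (hS : MeasurableSet S) (z : Euc d) :
    Measurable fun y : Euc d => S.indicator (fun _ => (1:ℝ)) (z - y) :=
  (measurable_const.indicator hS).comp (measurable_const.sub measurable_id)

lemma integrable_ind_mul {S : Set (Euc d)} (hS : MeasurableSet S) {ψ φ : Euc d → ℝ}
    (hψm : Measurable ψ) (hψd : ∀ y, |ψ y| ≤ φ y) (hφi : Integrable φ) (z : Euc d) :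
    Integrable (fun y => S.indicator (fun _ => (1:ℝ)) (z - y) * ψ y) := by
  refine Integrable.mono' hφi (((meas_indicator_comp S hS z).mul hψm).aestronglyMeasurable) ?_
  filter_upwards [] with y
  rw [Real.norm_eq_abs, abs_mul]
  calc |S.indicator (fun _ => (1:ℝ)) (z - y)| * |ψ y| ≤ 1 * |ψ y| := by
        apply mul_le_mul_of_nonneg_right _ (abs_nonneg _)
        rw [abs_of_nonneg (indicator_nonneg' _ _)]; exact indicator_le_one _ _
    _ ≤ φ y := by rw [one_mul]; exact hψd y

/-- difference bound for inner integrals with bounded density. -/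
lemma gfun_like_diff_le {S T : Set (Euc d)} (hS : MeasurableSet S) (hT : MeasurableSet T)
    (hST : volume (symmDiff S T) ≠ ⊤)
    {ψ φ : Euc d → ℝ} (hψm : Measurable ψ) (hψnn : ∀ y, 0 ≤ ψ y) {M : ℝ}
    (hψM : ∀ y, ψ y ≤ M) (hψd : ∀ y, |ψ y| ≤ φ y) (hφi : Integrable φ) (z : Euc d) :
    |(∫ y, S.indicator (fun _ => (1:ℝ)) (z - y) * ψ y) -
      (∫ y, T.indicator (fun _ => (1:ℝ)) (z - y) * ψ y)|
      ≤ M * (volume (symmDiff S T)).toReal := by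
  have hM0 : 0 ≤ M := le_trans (hψnn 0) (hψM 0)
  have hSi := integrable_ind_mul hS hψm hψd hφi z
  have hTi := integrable_ind_mul hT hψm hψd hφi z
  rw [← integral_sub hSi hTi]
  have hpt : ∀ y : Euc d, z - y = -y + z := fun y => by module
  have hpre : (fun y : Euc d => z - y) ⁻¹' (symmDiff S T) =
      Neg.neg ⁻¹' ((fun y : Euc d => y + z) ⁻¹' (symmDiff S T)) := by
    ext y; simp only [Set.mem_preimage]; rw [hpt y]
  have hvol : volume ((fun y : Euc d => z - y) ⁻¹' (symmDiff S T)) = volume (symmDiff S T) := by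
    rw [hpre, Measure.measure_preimage_neg, measure_preimage_add_right]
  have hmeas_pre : MeasurableSet ((fun y : Euc d => z - y) ⁻¹' (symmDiff S T)) :=
    (hS.symmDiff hT).preimage (measurable_const.sub measurable_id)
  have hmaj : Integrable (fun y : Euc d =>
      ((fun y : Euc d => z - y) ⁻¹' (symmDiff S T)).indicator (fun _ => (1:ℝ)) y * M) := by
    apply Integrable.mul_const
    rw [integrable_indicator_iff hmeas_pre]
    exact integrableOn_const (by rw [hvol]; exact hST) (by simp)
  calc |∫ y, (S.indicator (fun _ => (1:ℝ)) (z - y) * ψ y -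
          T.indicator (fun _ => (1:ℝ)) (z - y) * ψ y)|
      ≤ ∫ y, |S.indicator (fun _ => (1:ℝ)) (z - y) * ψ y -
          T.indicator (fun _ => (1:ℝ)) (z - y) * ψ y| := by
        simpa [Real.norm_eq_abs] using norm_integral_le_integral_norm
          (μ := volume) (f := fun y => S.indicator (fun _ => (1:ℝ)) (z - y) * ψ y -
            T.indicator (fun _ => (1:ℝ)) (z - y) * ψ y)
    _ ≤ ∫ y, ((fun y : Euc d => z - y) ⁻¹' (symmDiff S T)).indicator (fun _ => (1:ℝ)) y * M := by
        apply integral_mono (hSi.sub hTi).abs hmaj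
        intro y
        simp only [Pi.sub_apply]
        rw [← sub_mul, abs_mul, abs_of_nonneg (hψnn y)]
        have h1 : |S.indicator (fun _ => (1:ℝ)) (z - y) - T.indicator (fun _ => (1:ℝ)) (z - y)|
            ≤ (symmDiff S T).indicator (fun _ => (1:ℝ)) (z - y) := abs_indicator_sub_le S T _
        have h2 : (symmDiff S T).indicator (fun _ => (1:ℝ)) (z - y)
            = ((fun y : Euc d => z - y) ⁻¹' (symmDiff S T)).indicator (fun _ => (1:ℝ)) y := by
          by_cases h : z - y ∈ symmDiff S T
          · rw [Set.indicator_of_mem h]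
            exact (Set.indicator_of_mem (show y ∈ (fun y => z - y) ⁻¹' (symmDiff S T) from h) (fun _ => (1:ℝ))).symm
          · rw [Set.indicator_of_notMem h]
            exact (Set.indicator_of_notMem
              (show y ∉ (fun y => z - y) ⁻¹' (symmDiff S T) from fun hc => h hc) (fun _ => (1:ℝ))).symm
        calc |S.indicator (fun _ => (1:ℝ)) (z - y) - T.indicator (fun _ => (1:ℝ)) (z - y)| * ψ y
            ≤ (symmDiff S T).indicator (fun _ => (1:ℝ)) (z - y) * M := by
              apply mul_le_mul h1 (hψM y) (hψnn y) (indicator_nonneg' _ _)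
          _ = _ := by rw [h2]
    _ = M * (volume (symmDiff S T)).toReal := by
        rw [integral_mul_const, integral_indicator_const _ hmeas_pre]
        rw [measureReal_def, hvol]; simp [mul_comm]

/-- Joint measurability of the inner mollified indicator. -/
lemma meas_uncurry_gfun (hyp : HypK K Θ C₀ 𝒦) (hC₀ : 0 < C₀)
    {φ : Euc d → ℝ} (hφm : Measurable φ) (hφnn : ∀ y, 0 ≤ φ y) (hφi : Integrable φ)
    (a : Euc d) :
    Measurable (Function.uncurry fun y' z => gfun K φ a y' z) := by
  obtain ⟨C₃, hC₃pos, hC₃⟩ := vol_enl_le hyp hC₀ (C₀ + 1) (by linarith)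
  have hKmeas : ∀ b : Euc d, MeasurableSet (K b) := fun b => (hyp.compact b).isClosed.measurableSet
  -- truncated versions
  set ψ : ℕ → Euc d → ℝ := fun M y => min (φ y) (M : ℝ) with hψ
  have hψm : ∀ M, Measurable (ψ M) := fun M => hφm.min measurable_const
  have hψnn : ∀ M y, 0 ≤ ψ M y := fun M y => le_min (hφnn y) (by positivity)
  have hψM : ∀ M y, ψ M y ≤ (M : ℝ) := fun M y => min_le_right _ _
  have hψd : ∀ M y, |ψ M y| ≤ φ y := fun M y => by
    rw [abs_of_nonneg (hψnn M y)]; exact min_le_left _ _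
  have hvolK : ∀ b b' : Euc d, ‖b - b'‖ ≤ 1 →
      volume (symmDiff (K b) (K b')) ≤ ENNReal.ofReal (C₃ * (C₀ * ‖b - b'‖)) := by
    intro b b' hbb
    refine vol_symmDiff_K hyp hC₀ (by linarith) hC₃ b b' (le_refl _) ?_
    calc C₀ * ‖b - b'‖ ≤ C₀ * 1 := by
          exact mul_le_mul_of_nonneg_left hbb (le_of_lt hC₀)
      _ ≤ C₀ + 1 := by linarith
  have hvolKfin : ∀ b b' : Euc d, volume (symmDiff (K b) (K b')) ≠ ⊤ := by
    intro b b'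
    have hsub : symmDiff (K b) (K b') ⊆ 𝒦 := by
      intro u hu
      rw [Set.mem_symmDiff] at hu
      rcases hu with ⟨h1, _⟩ | ⟨h1, _⟩
      · exact hyp.subset_env b h1
      · exact hyp.subset_env b' h1
    exact ne_top_of_le_ne_top (hyp.compact_env.measure_ne_top) (measure_mono hsub)
  -- each truncated function is jointly measurable
  have hgM : ∀ M : ℕ, Measurable (Function.uncurry fun y' z =>
      ∫ y, (K (a - y')).indicator (fun _ => (1:ℝ)) (z - y) * ψ M y) := by
    intro M
    apply measurable_uncurry_of_continuous_of_measurable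
    · -- continuity in y' for fixed z
      intro z
      rw [continuous_iff_continuousAt]
      intro y₀
      rw [Metric.continuousAt_iff]
      intro e he
      refine ⟨min 1 (e / ((M : ℝ) * C₃ * C₀ + 1)), lt_min one_pos (by positivity), ?_⟩
      intro y₁ hy₁
      rw [dist_eq_norm] at hy₁ ⊢
      have hnorm : ‖(a - y₁) - (a - y₀)‖ = ‖y₁ - y₀‖ := by
        rw [show (a - y₁) - (a - y₀) = -(y₁ - y₀) by module, norm_neg]
      have hle1 : ‖y₁ - y₀‖ < 1 := lt_of_lt_of_le hy₁ (min_le_left _ _)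
      have hvol := hvolK (a - y₁) (a - y₀) (by rw [hnorm]; exact le_of_lt hle1)
      have hvolR : (volume (symmDiff (K (a - y₁)) (K (a - y₀)))).toReal
          ≤ C₃ * (C₀ * ‖y₁ - y₀‖) := by
        rw [hnorm] at hvol
        exact ENNReal.toReal_le_of_le_ofReal (by positivity) hvol
      have hdiff := gfun_like_diff_le (hKmeas (a - y₁)) (hKmeas (a - y₀))
        (hvolKfin _ _) (hψm M) (hψnn M) (hψM M) (hψd M) hφi z
      calc |(∫ y, (K (a - y₁)).indicator (fun _ => (1:ℝ)) (z - y) * ψ M y) -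
            ∫ y, (K (a - y₀)).indicator (fun _ => (1:ℝ)) (z - y) * ψ M y|
          ≤ (M : ℝ) * (volume (symmDiff (K (a - y₁)) (K (a - y₀)))).toReal := hdiff
        _ ≤ (M : ℝ) * (C₃ * (C₀ * ‖y₁ - y₀‖)) := by
            apply mul_le_mul_of_nonneg_left hvolR (by positivity)
        _ < e := by
            have h2 : ‖y₁ - y₀‖ < e / ((M : ℝ) * C₃ * C₀ + 1) :=
              lt_of_lt_of_le hy₁ (min_le_right _ _)
            have h3 : (0:ℝ) < (M : ℝ) * C₃ * C₀ + 1 := by positivity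
            rw [lt_div_iff₀ h3] at h2
            nlinarith [norm_nonneg (y₁ - y₀)]
    · -- measurability in z for fixed y'
      intro y'
      have hjm : StronglyMeasurable (Function.uncurry fun z y =>
          (K (a - y')).indicator (fun _ => (1:ℝ)) (z - y) * ψ M y) := by
        apply Measurable.stronglyMeasurable
        apply Measurable.mul
        · exact (measurable_const.indicator (hKmeas (a - y'))).comp
            (measurable_fst.sub measurable_snd)
        · exact (hψm M).comp measurable_snd
      exact hjm.integral_prod_right.measurable
  -- pointwise convergence
  have htend : Filter.Tendsto (fun M : ℕ => Function.uncurry fun y' z =>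
      ∫ y, (K (a - y')).indicator (fun _ => (1:ℝ)) (z - y) * ψ M y) Filter.atTop
      (nhds (Function.uncurry fun y' z => gfun K φ a y' z)) := by
    rw [tendsto_pi_nhds]
    rintro ⟨y', z⟩
    simp only [Function.uncurry_apply_pair]
    apply tendsto_integral_of_dominated_convergence φ
    · intro M
      exact ((meas_indicator_comp _ (hKmeas (a - y')) z).mul (hψm M)).aestronglyMeasurable
    · exact hφi
    · intro M
      filter_upwards [] with y
      rw [Real.norm_eq_abs, abs_mul]
      calc |(K (a - y')).indicator (fun _ => (1:ℝ)) (z - y)| * |ψ M y| ≤ 1 * |ψ M y| := by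
            apply mul_le_mul_of_nonneg_right _ (abs_nonneg _)
            rw [abs_of_nonneg (indicator_nonneg' _ _)]; exact indicator_le_one _ _
        _ ≤ φ y := by rw [one_mul]; exact hψd M y
    · filter_upwards [] with y
      apply Filter.Tendsto.congr' _ tendsto_const_nhds
      filter_upwards [Filter.eventually_ge_atTop ⌈φ y⌉₊] with M hM
      have : ψ M y = φ y := by
        rw [hψ]; simp only
        rw [min_eq_left]
        exact le_trans (Nat.le_ceil _) (Nat.cast_le.2 hM)
      rw [this]
  exact measurable_of_tendsto_metrizable hgM htend

end Meas




section Est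
variable {d : ℕ} {K Θ : Euc d → Set (Euc d)} {C₀ : ℝ} {𝒦 : Set (Euc d)}

lemma mollInd2_eq (φε φη : Euc d → ℝ) (a z : Euc d) :
    mollInd2 φε φη K a z = ∫ y', gfun K φε a y' z * φη y' := rfl

lemma gfun_nonneg {φ : Euc d → ℝ} (hφnn : ∀ y, 0 ≤ φ y) (a y' z : Euc d) :
    0 ≤ gfun K φ a y' z :=
  integral_nonneg fun y => mul_nonneg (indicator_nonneg' _ _) (hφnn y)

lemma gfun_le_one {φ : Euc d → ℝ} {a y' : Euc d} (hK : MeasurableSet (K (a - y')))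
    (hφm : Measurable φ) (hφnn : ∀ y, 0 ≤ φ y) (hφi : Integrable φ)
    (hφ1 : (∫ y, φ y) = 1) (z : Euc d) :
    gfun K φ a y' z ≤ 1 := by
  have h1 : gfun K φ a y' z ≤ ∫ y, φ y := by
    apply integral_mono (integrable_ind_mul hK hφm
      (fun y => by rw [abs_of_nonneg (hφnn y)]) hφi z) hφi
    intro y
    calc (K (a - y')).indicator (fun _ => (1:ℝ)) (z - y) * φ y ≤ 1 * φ y :=
          mul_le_mul_of_nonneg_right (indicator_le_one _ _) (hφnn y)
      _ = φ y := one_mul _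
  rwa [hφ1] at h1

/-- The key `L¹`-in-`z` estimate for the difference of mollified indicators. -/
lemma key_L1_estimate (hyp : HypK K Θ C₀ 𝒦) (hC₀ : 0 < C₀)
    {C₃ R : ℝ} (hR : 1 ≤ R) (hC₃0 : 0 ≤ C₃)
    (hC₃ : ∀ (x : Euc d) (r : ℝ), 0 ≤ r → r ≤ R → volume (enl (Θ x) r) ≤ ENNReal.ofReal (C₃ * r))
    {φε φη : Euc d → ℝ}
    (hφεm : Measurable φε) (hφεnn : ∀ y, 0 ≤ φε y) (hφεi : Integrable φε)
    (hφε1 : (∫ y, φε y) = 1)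
    (hφηm : Measurable φη) (hφηnn : ∀ y, 0 ≤ φη y) (hφηi : Integrable φη)
    (hφη1 : (∫ y, φη y) = 1)
    (a a' δ : Euc d) (hδR : ‖δ‖ ≤ R) {r₂ : ℝ} (hr₂ : C₀ * ‖a' - a‖ ≤ r₂) (hr₂R : r₂ ≤ R) :
    ∫⁻ z, ENNReal.ofReal |mollInd2 φε φη K a' (z - δ) - mollInd2 φε φη K a z| ≤
      ENNReal.ofReal (C₃ * ‖δ‖ + C₃ * r₂) := by
  have hr₂0 : 0 ≤ r₂ := le_trans (by positivity) hr₂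
  have hKmeas : ∀ b : Euc d, MeasurableSet (K b) := fun b => (hyp.compact b).isClosed.measurableSet
  have hg : ∀ b : Euc d, Measurable (Function.uncurry fun y' z => gfun K φε b y' z) :=
    fun b => meas_uncurry_gfun hyp hC₀ hφεm hφεnn hφεi b
  have hslice : ∀ (b : Euc d) (z : Euc d), Measurable fun y' => gfun K φε b y' z :=
    fun b z => (hg b).comp (measurable_id.prodMk measurable_const)
  have hgnn : ∀ (b : Euc d) y' z, 0 ≤ gfun K φε b y' z := fun b y' z => gfun_nonneg hφεnn b y' z
  have hgle : ∀ (b : Euc d) y' z, gfun K φε b y' z ≤ 1 :=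
    fun b y' z => gfun_le_one (hKmeas _) hφεm hφεnn hφεi hφε1 z
  have houter_int : ∀ (b z : Euc d), Integrable (fun y' => gfun K φε b y' z * φη y') := by
    intro b z
    refine Integrable.mono' hφηi ((hslice b z).mul hφηm).aestronglyMeasurable ?_
    filter_upwards [] with y'
    rw [Real.norm_eq_abs, abs_mul, abs_of_nonneg (hgnn b y' z), abs_of_nonneg (hφηnn y')]
    calc gfun K φε b y' z * φη y' ≤ 1 * φη y' :=
          mul_le_mul_of_nonneg_right (hgle b y' z) (hφηnn y')
      _ = φη y' := one_mul _
  have hφεl : ∫⁻ y, ENNReal.ofReal (φε y) = 1 := by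
    rw [← ofReal_integral_eq_lintegral_ofReal hφεi (Filter.Eventually.of_forall hφεnn), hφε1,
      ENNReal.ofReal_one]
  have hφηl : ∫⁻ y, ENNReal.ofReal (φη y) = 1 := by
    rw [← ofReal_integral_eq_lintegral_ofReal hφηi (Filter.Eventually.of_forall hφηnn), hφη1,
      ENNReal.ofReal_one]
  set Bd : ENNReal := ENNReal.ofReal (C₃ * ‖δ‖ + C₃ * r₂) with hBd
  -- the inner estimate, for each fixed y'
  have hinner : ∀ y' : Euc d,
      (∫⁻ z, ENNReal.ofReal |gfun K φε a' y' (z - δ) - gfun K φε a y' z|) ≤ Bd := by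
    intro y'
    set A' : Set (Euc d) := K (a' - y') with hA'
    set A : Set (Euc d) := K (a - y') with hA
    set P : Set (Euc d) := (fun u : Euc d => u - δ) ⁻¹' A' with hP
    have hPmeas : MeasurableSet P := (hKmeas _).preimage (measurable_id.sub measurable_const)
    have hvolPA : volume (symmDiff P A) ≤ Bd := by
      have h1 : volume (symmDiff P A') ≤ ENNReal.ofReal (C₃ * ‖δ‖) := by
        refine le_trans (measure_mono ?_) (hC₃ (a' - y') ‖δ‖ (norm_nonneg δ) hδR)
        refine le_trans (symmDiff_preimage_subset A' δ) ?_
        refine le_trans (Set.add_subset_add_right (hyp.h2i (a' - y'))) ?_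
        exact add_ball_subset_enl (Θ (a' - y'))
      have h2 : volume (symmDiff A' A) ≤ ENNReal.ofReal (C₃ * r₂) := by
        apply vol_symmDiff_K hyp hC₀ hR hC₃ (a' - y') (a - y') _ hr₂R
        have heq : (a' - y') - (a - y') = a' - a := by module
        rw [heq]; exact hr₂
      calc volume (symmDiff P A) ≤ volume (symmDiff P A') + volume (symmDiff A' A) :=
            measure_symmDiff_le _ _ _
        _ ≤ ENNReal.ofReal (C₃ * ‖δ‖) + ENNReal.ofReal (C₃ * r₂) := add_le_add h1 h2
        _ = Bd := by
            rw [hBd, ← ENNReal.ofReal_add (mul_nonneg hC₃0 (norm_nonneg _))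
              (mul_nonneg hC₃0 hr₂0)]
    have hpt : ∀ z, ENNReal.ofReal |gfun K φε a' y' (z - δ) - gfun K φε a y' z| ≤
        ∫⁻ y, ENNReal.ofReal (|A'.indicator (fun _ => (1:ℝ)) ((z - δ) - y) -
          A.indicator (fun _ => (1:ℝ)) (z - y)| * φε y) := by
      intro z
      have hint1 : Integrable (fun y => A'.indicator (fun _ => (1:ℝ)) ((z - δ) - y) * φε y) :=
        integrable_ind_mul (hKmeas _) hφεm (fun y => by rw [abs_of_nonneg (hφεnn y)]) hφεi (z - δ)
      have hint2 : Integrable (fun y => A.indicator (fun _ => (1:ℝ)) (z - y) * φε y) :=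
        integrable_ind_mul (hKmeas _) hφεm (fun y => by rw [abs_of_nonneg (hφεnn y)]) hφεi z
      have heqf : (fun y => |A'.indicator (fun _ => (1:ℝ)) ((z - δ) - y) * φε y -
          A.indicator (fun _ => (1:ℝ)) (z - y) * φε y|) =
          fun y => |A'.indicator (fun _ => (1:ℝ)) ((z - δ) - y) -
            A.indicator (fun _ => (1:ℝ)) (z - y)| * φε y := by
        funext y; rw [← sub_mul, abs_mul, abs_of_nonneg (hφεnn y)]
      have hreal : |gfun K φε a' y' (z - δ) - gfun K φε a y' z| ≤
          ∫ y, |A'.indicator (fun _ => (1:ℝ)) ((z - δ) - y) -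
            A.indicator (fun _ => (1:ℝ)) (z - y)| * φε y := by
        rw [show gfun K φε a' y' (z - δ) =
          ∫ y, A'.indicator (fun _ => (1:ℝ)) ((z - δ) - y) * φε y from rfl]
        rw [show gfun K φε a y' z =
          ∫ y, A.indicator (fun _ => (1:ℝ)) (z - y) * φε y from rfl]
        rw [← integral_sub hint1 hint2, ← heqf]
        simpa [Real.norm_eq_abs] using norm_integral_le_integral_norm
          (μ := volume) (f := fun y => A'.indicator (fun _ => (1:ℝ)) ((z - δ) - y) * φε y -
            A.indicator (fun _ => (1:ℝ)) (z - y) * φε y)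
      refine le_trans (ENNReal.ofReal_le_ofReal hreal) (le_of_eq ?_)
      rw [ofReal_integral_eq_lintegral_ofReal]
      · rw [← heqf]; exact (hint1.sub hint2).abs
      · exact Filter.Eventually.of_forall fun y => mul_nonneg (abs_nonneg _) (hφεnn y)
    have hmeaszy : Measurable (Function.uncurry fun z y : Euc d =>
        ENNReal.ofReal (|A'.indicator (fun _ => (1:ℝ)) ((z - δ) - y) -
          A.indicator (fun _ => (1:ℝ)) (z - y)| * φε y)) := by
      apply ENNReal.measurable_ofReal.comp
      apply Measurable.mul
      · apply Measurable.abs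
        apply Measurable.sub
        · exact (measurable_const.indicator (hKmeas (a' - y'))).comp
            ((measurable_fst.sub measurable_const).sub measurable_snd)
        · exact (measurable_const.indicator (hKmeas (a - y'))).comp
            (measurable_fst.sub measurable_snd)
      · exact hφεm.comp measurable_snd
    have hzfix : ∀ y : Euc d, (∫⁻ z, ENNReal.ofReal (|A'.indicator (fun _ => (1:ℝ)) ((z - δ) - y) -
        A.indicator (fun _ => (1:ℝ)) (z - y)| * φε y)) ≤ Bd * ENNReal.ofReal (φε y) := by
      intro y
      have hptz : ∀ z : Euc d, ENNReal.ofReal (|A'.indicator (fun _ => (1:ℝ)) ((z - δ) - y) -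
          A.indicator (fun _ => (1:ℝ)) (z - y)| * φε y) =
          ((symmDiff P A).indicator (fun _ => (1:ℝ≥0∞)) (z - y)) * ENNReal.ofReal (φε y) := by
        intro z
        rw [ENNReal.ofReal_mul (abs_nonneg _)]
        congr 1
        have hzz : (z - δ) - y = (z - y) - δ := by module
        rw [hzz]
        have hmemP : ((z - y) - δ ∈ A') ↔ (z - y ∈ P) := Iff.rfl
        by_cases h1 : (z - y) - δ ∈ A' <;> by_cases h2 : z - y ∈ A
        · have hmem : z - y ∉ symmDiff P A := by
            rw [Set.mem_symmDiff]; push_neg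
            constructor
            · intro _; exact h2
            · intro _; exact hmemP.1 h1
          simp [Set.indicator_apply, h1, h2, hmem]
        · have hmem : z - y ∈ symmDiff P A := by
            rw [Set.mem_symmDiff]; left; exact ⟨hmemP.1 h1, h2⟩
          simp [Set.indicator_apply, h1, h2, hmem]
        · have hmem : z - y ∈ symmDiff P A := by
            rw [Set.mem_symmDiff]; right; exact ⟨h2, fun hc => h1 (hmemP.2 hc)⟩
          simp [Set.indicator_apply, h1, h2, hmem]
        · have hmem : z - y ∉ symmDiff P A := by
            rw [Set.mem_symmDiff]; push_neg
            constructor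
            · intro hc; exact absurd (hmemP.2 hc) h1
            · intro hc; exact absurd hc h2
          simp [Set.indicator_apply, h1, h2, hmem]
      calc (∫⁻ z, ENNReal.ofReal (|A'.indicator (fun _ => (1:ℝ)) ((z - δ) - y) -
            A.indicator (fun _ => (1:ℝ)) (z - y)| * φε y))
          = ∫⁻ z, ((symmDiff P A).indicator (fun _ => (1:ℝ≥0∞)) (z - y)) *
              ENNReal.ofReal (φε y) := lintegral_congr hptz
        _ = (∫⁻ z, (symmDiff P A).indicator (fun _ => (1:ℝ≥0∞)) (z - y)) *
              ENNReal.ofReal (φε y) := lintegral_mul_const' _ _ ENNReal.ofReal_ne_top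
        _ ≤ Bd * ENNReal.ofReal (φε y) := by
            apply mul_le_mul_left
            have htr : (∫⁻ z, (symmDiff P A).indicator (fun _ => (1:ℝ≥0∞)) (z - y)) =
                ∫⁻ u, (symmDiff P A).indicator (fun _ => (1:ℝ≥0∞)) u := by
              have := lintegral_add_right_eq_self (μ := volume)
                (fun u => (symmDiff P A).indicator (fun _ => (1:ℝ≥0∞)) u) (-y)
              rw [← this]
              apply lintegral_congr
              intro z; rw [sub_eq_add_neg]
            rw [htr]
            rw [show (fun _ => (1:ℝ≥0∞)) = (1 : Euc d → ℝ≥0∞) from rfl]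
            rw [lintegral_indicator_one (hPmeas.symmDiff (hKmeas _))]
            exact hvolPA
    calc (∫⁻ z, ENNReal.ofReal |gfun K φε a' y' (z - δ) - gfun K φε a y' z|)
        ≤ ∫⁻ z, ∫⁻ y, ENNReal.ofReal (|A'.indicator (fun _ => (1:ℝ)) ((z - δ) - y) -
            A.indicator (fun _ => (1:ℝ)) (z - y)| * φε y) := lintegral_mono hpt
      _ = ∫⁻ y, ∫⁻ z, ENNReal.ofReal (|A'.indicator (fun _ => (1:ℝ)) ((z - δ) - y) -
            A.indicator (fun _ => (1:ℝ)) (z - y)| * φε y) :=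
          lintegral_lintegral_swap hmeaszy.aemeasurable
      _ ≤ ∫⁻ y, Bd * ENNReal.ofReal (φε y) := lintegral_mono hzfix
      _ = Bd * ∫⁻ y, ENNReal.ofReal (φε y) := lintegral_const_mul' _ _ ENNReal.ofReal_ne_top
      _ = Bd := by rw [hφεl, mul_one]
  -- outer layer
  have houtpt : ∀ z, ENNReal.ofReal |mollInd2 φε φη K a' (z - δ) - mollInd2 φε φη K a z| ≤
      ∫⁻ y', ENNReal.ofReal (|gfun K φε a' y' (z - δ) - gfun K φε a y' z| * φη y') := by
    intro z
    have hi1 := houter_int a' (z - δ)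
    have hi2 := houter_int a z
    have heqf : (fun y' => |gfun K φε a' y' (z - δ) * φη y' - gfun K φε a y' z * φη y'|) =
        fun y' => |gfun K φε a' y' (z - δ) - gfun K φε a y' z| * φη y' := by
      funext y'; rw [← sub_mul, abs_mul, abs_of_nonneg (hφηnn y')]
    have hreal : |mollInd2 φε φη K a' (z - δ) - mollInd2 φε φη K a z| ≤
        ∫ y', |gfun K φε a' y' (z - δ) - gfun K φε a y' z| * φη y' := by
      rw [mollInd2_eq, mollInd2_eq, ← integral_sub hi1 hi2, ← heqf]
      simpa [Real.norm_eq_abs] using norm_integral_le_integral_norm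
        (μ := volume) (f := fun y' => gfun K φε a' y' (z - δ) * φη y' -
          gfun K φε a y' z * φη y')
    refine le_trans (ENNReal.ofReal_le_ofReal hreal) (le_of_eq ?_)
    rw [ofReal_integral_eq_lintegral_ofReal]
    · rw [← heqf]; exact (hi1.sub hi2).abs
    · exact Filter.Eventually.of_forall fun y' => mul_nonneg (abs_nonneg _) (hφηnn y')
  have hmeaszy' : Measurable (Function.uncurry fun z y' : Euc d =>
      ENNReal.ofReal (|gfun K φε a' y' (z - δ) - gfun K φε a y' z| * φη y')) := by
    apply ENNReal.measurable_ofReal.comp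
    apply Measurable.mul
    · apply Measurable.abs
      apply Measurable.sub
      · exact (hg a').comp (measurable_snd.prodMk (measurable_fst.sub measurable_const))
      · exact (hg a).comp (measurable_snd.prodMk measurable_fst)
    · exact hφηm.comp measurable_snd
  calc (∫⁻ z, ENNReal.ofReal |mollInd2 φε φη K a' (z - δ) - mollInd2 φε φη K a z|)
      ≤ ∫⁻ z, ∫⁻ y', ENNReal.ofReal (|gfun K φε a' y' (z - δ) - gfun K φε a y' z| * φη y') :=
        lintegral_mono houtpt
    _ = ∫⁻ y', ∫⁻ z, ENNReal.ofReal (|gfun K φε a' y' (z - δ) - gfun K φε a y' z| * φη y') :=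
        lintegral_lintegral_swap hmeaszy'.aemeasurable
    _ ≤ ∫⁻ y', Bd * ENNReal.ofReal (φη y') := by
        apply lintegral_mono
        intro y'
        have hsplit : (∫⁻ z, ENNReal.ofReal (|gfun K φε a' y' (z - δ) - gfun K φε a y' z| *
            φη y')) = (∫⁻ z, ENNReal.ofReal |gfun K φε a' y' (z - δ) - gfun K φε a y' z|) *
            ENNReal.ofReal (φη y') := by
          calc (∫⁻ z, ENNReal.ofReal (|gfun K φε a' y' (z - δ) - gfun K φε a y' z| * φη y'))
              = ∫⁻ z, ENNReal.ofReal |gfun K φε a' y' (z - δ) - gfun K φε a y' z| *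
                ENNReal.ofReal (φη y') :=
                lintegral_congr fun z => ENNReal.ofReal_mul (abs_nonneg _)
            _ = (∫⁻ z, ENNReal.ofReal |gfun K φε a' y' (z - δ) - gfun K φε a y' z|) *
                ENNReal.ofReal (φη y') := lintegral_mul_const' _ _ ENNReal.ofReal_ne_top
        exact le_trans (le_of_eq hsplit) (mul_le_mul_left (hinner y') _)
    _ = Bd * ∫⁻ y', ENNReal.ofReal (φη y') := lintegral_const_mul' _ _ ENNReal.ofReal_ne_top
    _ = Bd := by rw [hφηl, mul_one]

end Est


section Fin
variable {d : ℕ} {K Θ : Euc d → Set (Euc d)} {C₀ : ℝ} {𝒦 : Set (Euc d)}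

lemma integrable_outer (hyp : HypK K Θ C₀ 𝒦) (hC₀ : 0 < C₀)
    {φε φη : Euc d → ℝ}
    (hφεm : Measurable φε) (hφεnn : ∀ y, 0 ≤ φε y) (hφεi : Integrable φε)
    (hφε1 : (∫ y, φε y) = 1)
    (hφηm : Measurable φη) (hφηnn : ∀ y, 0 ≤ φη y) (hφηi : Integrable φη)
    (b z : Euc d) : Integrable (fun y' => gfun K φε b y' z * φη y') := by
  have hKmeas : ∀ b' : Euc d, MeasurableSet (K b') :=
    fun b' => (hyp.compact b').isClosed.measurableSet
  have hg := meas_uncurry_gfun hyp hC₀ hφεm hφεnn hφεi b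
  have hslice : Measurable fun y' => gfun K φε b y' z :=
    hg.comp (measurable_id.prodMk measurable_const)
  refine Integrable.mono' hφηi (hslice.mul hφηm).aestronglyMeasurable ?_
  filter_upwards [] with y'
  rw [Real.norm_eq_abs, abs_mul, abs_of_nonneg (gfun_nonneg hφεnn b y' z),
    abs_of_nonneg (hφηnn y')]
  calc gfun K φε b y' z * φη y' ≤ 1 * φη y' :=
        mul_le_mul_of_nonneg_right (gfun_le_one (hKmeas _) hφεm hφεnn hφεi hφε1 z) (hφηnn y')
    _ = φη y' := one_mul _

lemma mollInd2_nonneg {φε φη : Euc d → ℝ} (hφεnn : ∀ y, 0 ≤ φε y) (hφηnn : ∀ y, 0 ≤ φη y)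
    (a z : Euc d) : 0 ≤ mollInd2 φε φη K a z :=
  integral_nonneg fun y' => mul_nonneg (gfun_nonneg hφεnn a y' z) (hφηnn y')

lemma mollInd2_le_one (hyp : HypK K Θ C₀ 𝒦) (hC₀ : 0 < C₀)
    {φε φη : Euc d → ℝ}
    (hφεm : Measurable φε) (hφεnn : ∀ y, 0 ≤ φε y) (hφεi : Integrable φε)
    (hφε1 : (∫ y, φε y) = 1)
    (hφηm : Measurable φη) (hφηnn : ∀ y, 0 ≤ φη y) (hφηi : Integrable φη)
    (hφη1 : (∫ y, φη y) = 1) (a z : Euc d) : mollInd2 φε φη K a z ≤ 1 := by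
  have hKmeas : ∀ b' : Euc d, MeasurableSet (K b') :=
    fun b' => (hyp.compact b').isClosed.measurableSet
  have h1 : mollInd2 φε φη K a z ≤ ∫ y', φη y' := by
    rw [mollInd2_eq]
    apply integral_mono (integrable_outer hyp hC₀ hφεm hφεnn hφεi hφε1 hφηm hφηnn hφηi a z) hφηi
    intro y'
    calc gfun K φε a y' z * φη y' ≤ 1 * φη y' :=
          mul_le_mul_of_nonneg_right (gfun_le_one (hKmeas _) hφεm hφεnn hφεi hφε1 z) (hφηnn y')
      _ = φη y' := one_mul _
  rwa [hφη1] at h1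

lemma meas_mollInd2 (hyp : HypK K Θ C₀ 𝒦) (hC₀ : 0 < C₀)
    {φε φη : Euc d → ℝ}
    (hφεm : Measurable φε) (hφεnn : ∀ y, 0 ≤ φε y) (hφεi : Integrable φε)
    (hφηm : Measurable φη) (a : Euc d) :
    Measurable fun z => mollInd2 φε φη K a z := by
  have hg := meas_uncurry_gfun hyp hC₀ hφεm hφεnn hφεi a
  have hm : Measurable (Function.uncurry fun z y' => gfun K φε a y' z * φη y') :=
    (hg.comp (measurable_snd.prodMk measurable_fst)).mul (hφηm.comp measurable_snd)
  exact hm.stronglyMeasurable.integral_prod_right.measurable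

lemma mollInd2_congr {φε ψε φη ψη : Euc d → ℝ}
    (hε : φε =ᵐ[volume] ψε) (hη : φη =ᵐ[volume] ψη) (a z : Euc d) :
    mollInd2 φε φη K a z = mollInd2 ψε ψη K a z := by
  have hinner : ∀ y', (∫ y, (K (a - y')).indicator (fun _ => (1:ℝ)) (z - y) * φε y)
      = ∫ y, (K (a - y')).indicator (fun _ => (1:ℝ)) (z - y) * ψε y := fun y' =>
    integral_congr_ae (hε.mono fun y hy => by simp only [hy])
  apply integral_congr_ae
  refine hη.mono fun y' hy' => ?_
  simp only [hinner y', hy']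

lemma velMoll_congr {gradφ : Euc d → Euc d} {w : Euc d → Euc d} {O : Set (Euc d)}
    {ρ : Measure (Euc d)} {φε ψε φη ψη : Euc d → ℝ}
    (hε : φε =ᵐ[volume] ψε) (hη : φη =ᵐ[volume] ψη) (x0 : Euc d) :
    velMoll gradφ K w φε φη O ρ x0 = velMoll gradφ K w ψε ψη O ρ x0 := by
  refine integral_congr_ae (Filter.Eventually.of_forall fun y => ?_)
  simp only [mollInd2_congr (K := K) hε hη]

lemma abs_coord_le (u : Euc d) (i : Fin d) : |u i| ≤ ‖u‖ := by
  rw [EuclideanSpace.norm_eq, ← Real.sqrt_sq_eq_abs]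
  apply Real.sqrt_le_sqrt
  have := Finset.single_le_sum (f := fun j => ‖u j‖ ^ 2)
    (fun j _ => sq_nonneg _) (Finset.mem_univ i)
  simpa [Real.norm_eq_abs, sq_abs] using this

end Fin

end MollAux

/-- Divergence-type estimate for the mollified velocity field: there is a constant `C > 0`
depending only on `C₀`, `‖∇φ‖_{W^{1,∞}}` and `‖w‖_Lip` but independent of `ε`, `η`, `ρ`,
such that for every coordinate `i`, every `x`, and every `0 < h ≤ 1`,
`|(V^{ε,η}[ρ])_i(x + h e_i) − (V^{ε,η}[ρ])_i(x)| ≤ C h ‖ρ‖_{L¹∩L∞}`. -/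
theorem mollified_velocity_component_increment_le
    {d : ℕ} (O : Set (Euc d)) (hObd : Bornology.IsBounded O) (hOmeas : MeasurableSet O)
    (K Θ : Euc d → Set (Euc d)) (C₀ : ℝ) (hC₀ : 0 < C₀) (𝒦 : Set (Euc d))
    (hyp : HypK K Θ C₀ 𝒦)
    (w : Euc d → Euc d) (Lw : NNReal) (hw : LipschitzWith Lw w)
    (gradφ : Euc d → Euc d) (Mφ : ℝ) (hMφ : ∀ x, ‖gradφ x‖ ≤ Mφ)
    (Lφ : NNReal) (hLφ : LipschitzWith Lφ gradφ) :
    ∃ C > 0,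
      ∀ (ρ : Measure (Euc d)), IsFiniteMeasure ρ → ρ Oᶜ = 0 →
      ∀ (f : Euc d → ℝ), (∀ x, 0 ≤ f x) →
        ρ = volume.withDensity (fun x => ENNReal.ofReal (f x)) →
        Integrable f → eLpNorm f ⊤ volume < ⊤ →
      ∀ (ε η : ℝ), 0 < ε → ε ≤ 1/2 → 0 < η → η ≤ 1/2 →
      ∀ (φε φη : Euc d → ℝ),
        (∀ x, 0 ≤ φε x) → Integrable φε → (∫ x, φε x) = 1 →
        Function.support φε ⊆ Metric.closedBall 0 ε →
        (∀ x, 0 ≤ φη x) → Integrable φη → (∫ x, φη x) = 1 →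
        Function.support φη ⊆ Metric.closedBall 0 η →
      ∀ (i : Fin d) (x : Euc d) (h : ℝ), 0 < h → h ≤ 1 →
        |velMoll gradφ K w φε φη O ρ (x + h • EuclideanSpace.single i (1:ℝ)) i -
          velMoll gradφ K w φε φη O ρ x i| ≤
        C * h * ((∫ y, f y) + (eLpNorm f ⊤ volume).toReal) := by
  classical
  have hLw0 : (0:ℝ) ≤ (Lw : ℝ) := Lw.coe_nonneg
  have hMφ0 : (0:ℝ) ≤ Mφ := le_trans (norm_nonneg _) (hMφ 0)
  have hLφ0 : (0:ℝ) ≤ (Lφ : ℝ) := Lφ.coe_nonneg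
  set R : ℝ := C₀ * ((Lw : ℝ) + 1) + 1 with hRdef
  have hR : 1 ≤ R := by nlinarith
  obtain ⟨C₃, hC₃pos, hC₃⟩ := MollAux.vol_enl_le hyp hC₀ R hR
  set C₅ : ℝ := C₃ + C₃ * (C₀ * ((Lw : ℝ) + 1)) with hC₅def
  have hC₅pos : 0 < C₅ := by nlinarith
  refine ⟨(Lφ : ℝ) + Mφ * C₅ + 1, by positivity, ?_⟩
  intro ρ hρfin hρOc f hf hρeq hfint hfsup ε η hε hε2 hη hη2 φε φη hφεnn hφεi hφε1 hφεsupp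
    hφηnn hφηi hφη1 hφηsupp i x h hh hh1
  haveI := hρfin
  -- measurable versions of the mollifiers
  obtain ⟨ψε, hψεm, hψεe, hψεnn, hψεi, hψε1⟩ :
      ∃ ψ : Euc d → ℝ, Measurable ψ ∧ φε =ᵐ[volume] ψ ∧ (∀ y, 0 ≤ ψ y) ∧ Integrable ψ ∧
        (∫ y, ψ y) = 1 := by
    refine ⟨fun y => max (hφεi.1.mk φε y) 0,
      (hφεi.1.stronglyMeasurable_mk.measurable).max measurable_const, ?_,
      fun y => le_max_right _ _, ?_, ?_⟩
    · refine hφεi.1.ae_eq_mk.mono fun y hy => ?_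
      simp only
      rw [← hy, max_eq_left (hφεnn y)]
    · exact hφεi.congr (hφεi.1.ae_eq_mk.mono fun y hy => by
        simp only; rw [← hy, max_eq_left (hφεnn y)])
    · rw [← integral_congr_ae (hφεi.1.ae_eq_mk.mono fun y hy => by
        simp only; rw [← hy, max_eq_left (hφεnn y)] : φε =ᵐ[volume] _), hφε1]
  obtain ⟨ψη, hψηm, hψηe, hψηnn, hψηi, hψη1⟩ :
      ∃ ψ : Euc d → ℝ, Measurable ψ ∧ φη =ᵐ[volume] ψ ∧ (∀ y, 0 ≤ ψ y) ∧ Integrable ψ ∧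
        (∫ y, ψ y) = 1 := by
    refine ⟨fun y => max (hφηi.1.mk φη y) 0,
      (hφηi.1.stronglyMeasurable_mk.measurable).max measurable_const, ?_,
      fun y => le_max_right _ _, ?_, ?_⟩
    · refine hφηi.1.ae_eq_mk.mono fun y hy => ?_
      simp only
      rw [← hy, max_eq_left (hφηnn y)]
    · exact hφηi.congr (hφηi.1.ae_eq_mk.mono fun y hy => by
        simp only; rw [← hy, max_eq_left (hφηnn y)])
    · rw [← integral_congr_ae (hφηi.1.ae_eq_mk.mono fun y hy => by
        simp only; rw [← hy, max_eq_left (hφηnn y)] : φη =ᵐ[volume] _), hφη1]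
  set δ : Euc d := h • EuclideanSpace.single i (1:ℝ) with hδdef
  set x' : Euc d := x + δ with hx'def
  have hδnorm : ‖δ‖ = h := by
    rw [hδdef, norm_smul, EuclideanSpace.norm_single, Real.norm_of_nonneg hh.le, norm_one,
      mul_one]
  have hx'sub : x' - x = δ := by rw [hx'def]; module
  set N : ℝ≥0∞ := eLpNorm f ⊤ volume with hNdef
  have hN : N ≠ ⊤ := hfsup.ne
  set F : ℝ := ∫ y, f y with hFdef
  have hF0 : 0 ≤ F := integral_nonneg hf
  have hN'0 : 0 ≤ N.toReal := ENNReal.toReal_nonneg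
  -- key L1 estimate
  have haa' : ‖w x' - w x‖ ≤ ((Lw : ℝ) + 1) * h := by
    have h1 := hw.dist_le_mul x' x
    rw [dist_eq_norm, dist_eq_norm, hx'sub, hδnorm] at h1
    nlinarith
  have hkey := MollAux.key_L1_estimate hyp hC₀ hR hC₃pos.le hC₃ hψεm hψεnn hψεi hψε1
    hψηm hψηnn hψηi hψη1 (w x) (w x') δ
    (by rw [hδnorm]; nlinarith)
    (mul_le_mul_of_nonneg_left haa' hC₀.le)
    (by nlinarith)
  -- measurability and bounds
  have hm_meas : ∀ b : Euc d, Measurable fun z => mollInd2 ψε ψη K b z :=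
    fun b => MollAux.meas_mollInd2 hyp hC₀ hψεm hψεnn hψεi hψηm b
  have hm_nn : ∀ b z, 0 ≤ mollInd2 ψε ψη K b z :=
    fun b z => MollAux.mollInd2_nonneg hψεnn hψηnn b z
  have hm_le : ∀ b z, mollInd2 ψε ψη K b z ≤ 1 :=
    fun b z => MollAux.mollInd2_le_one hyp hC₀ hψεm hψεnn hψεi hψε1 hψηm hψηnn hψηi hψη1 b z
  have hm_abs : ∀ b z, |mollInd2 ψε ψη K b z| ≤ 1 :=
    fun b z => abs_le.2 ⟨by linarith [hm_nn b z], hm_le b z⟩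
  have hgradmeas : Measurable gradφ := hLφ.continuous.measurable
  have hproji : Measurable fun v : Euc d => v i :=
    (EuclideanSpace.proj (𝕜 := ℝ) i).continuous.measurable
  have hgradi : ∀ x1 : Euc d, Measurable fun y => gradφ (x1 - y) i :=
    fun x1 => hproji.comp (hgradmeas.comp (measurable_const.sub measurable_id))
  have hgradiabs : ∀ x1 y : Euc d, |gradφ (x1 - y) i| ≤ Mφ :=
    fun x1 y => le_trans (MollAux.abs_coord_le _ i) (hMφ _)
  -- integrability of the full integrand
  have hInt : ∀ (b x0 : Euc d),
      Integrable (fun y => mollInd2 ψε ψη K b (y - x0) • gradφ (x0 - y)) (ρ.restrict O) := by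
    intro b x0
    refine Integrable.mono' (integrable_const Mφ) ?_ ?_
    · exact (((hm_meas b).comp (measurable_id.sub measurable_const)).smul
        (hgradmeas.comp (measurable_const.sub measurable_id))).aestronglyMeasurable
    · filter_upwards [] with y
      rw [norm_smul]
      calc ‖mollInd2 ψε ψη K b (y - x0)‖ * ‖gradφ (x0 - y)‖ ≤ 1 * Mφ := by
            apply mul_le_mul _ (hMφ _) (norm_nonneg _) zero_le_one
            rw [Real.norm_eq_abs]; exact hm_abs b _
        _ = Mφ := one_mul _
  -- scalar integrability of products
  have hIntc : ∀ (b x0 x1 : Euc d),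
      Integrable (fun y => mollInd2 ψε ψη K b (y - x0) * gradφ (x1 - y) i) (ρ.restrict O) := by
    intro b x0 x1
    refine Integrable.mono' (integrable_const Mφ) ?_ ?_
    · exact (((hm_meas b).comp (measurable_id.sub measurable_const)).mul
        (hgradi x1)).aestronglyMeasurable
    · filter_upwards [] with y
      rw [Real.norm_eq_abs, abs_mul]
      calc |mollInd2 ψε ψη K b (y - x0)| * |gradφ (x1 - y) i| ≤ 1 * Mφ :=
            mul_le_mul (hm_abs b _) (hgradiabs x1 y) (abs_nonneg _) zero_le_one
        _ = Mφ := one_mul _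
  -- component formula
  have hcomp : ∀ x0 : Euc d, velMoll gradφ K w ψε ψη O ρ x0 i =
      ∫ y in O, mollInd2 ψε ψη K (w x0) (y - x0) * gradφ (x0 - y) i ∂ρ := by
    intro x0
    have h1 := (EuclideanSpace.proj (𝕜 := ℝ) i).integral_comp_comm (hInt (w x0) x0)
    have h2 : velMoll gradφ K w ψε ψη O ρ x0 i =
        EuclideanSpace.proj (𝕜 := ℝ) i (velMoll gradφ K w ψε ψη O ρ x0) := rfl
    rw [h2, velMoll, ← h1]
    refine integral_congr_ae (Filter.Eventually.of_forall fun y => ?_)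
    simp [smul_eq_mul]
  -- the two pieces
  set D1 : Euc d → ℝ := fun y =>
    mollInd2 ψε ψη K (w x') (y - x') * (gradφ (x' - y) i - gradφ (x - y) i) with hD1def
  set D2 : Euc d → ℝ := fun y =>
    (mollInd2 ψε ψη K (w x') (y - x') - mollInd2 ψε ψη K (w x) (y - x)) * gradφ (x - y) i
    with hD2def
  have hD1int : Integrable D1 (ρ.restrict O) := by
    refine ((hIntc (w x') x' x').sub (hIntc (w x') x' x)).congr
      (Filter.Eventually.of_forall fun y => ?_)
    simp only [Pi.sub_apply, hD1def]; ring
  have hD2int : Integrable D2 (ρ.restrict O) := by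
    refine ((hIntc (w x') x' x).sub (hIntc (w x) x x)).congr
      (Filter.Eventually.of_forall fun y => ?_)
    simp only [Pi.sub_apply, hD2def]; ring
  have hsplit : velMoll gradφ K w ψε ψη O ρ x' i - velMoll gradφ K w ψε ψη O ρ x i =
      (∫ y in O, D1 y ∂ρ) + ∫ y in O, D2 y ∂ρ := by
    rw [hcomp x', hcomp x, ← integral_sub (hIntc (w x') x' x') (hIntc (w x) x x),
      ← integral_add hD1int hD2int]
    refine integral_congr_ae (Filter.Eventually.of_forall fun y => ?_)
    rw [hD1def, hD2def]; ring
  -- bound for D1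
  have hD1ptbd : ∀ y, ‖D1 y‖ ≤ (Lφ : ℝ) * h := by
    intro y
    have hcoord : |gradφ (x' - y) i - gradφ (x - y) i| ≤ (Lφ : ℝ) * h := by
      have hsubc : gradφ (x' - y) i - gradφ (x - y) i =
          (gradφ (x' - y) - gradφ (x - y)) i := by simp
      rw [hsubc]
      refine le_trans (MollAux.abs_coord_le _ i) ?_
      have h1 := hLφ.dist_le_mul (x' - y) (x - y)
      rw [dist_eq_norm, dist_eq_norm] at h1
      have heq : (x' - y) - (x - y) = δ := by rw [hx'def]; module
      rw [heq, hδnorm] at h1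
      exact h1
    rw [hD1def, Real.norm_eq_abs]
    simp only
    rw [abs_mul]
    calc |mollInd2 ψε ψη K (w x') (y - x')| * |gradφ (x' - y) i - gradφ (x - y) i|
        ≤ 1 * ((Lφ : ℝ) * h) := mul_le_mul (hm_abs _ _) hcoord (abs_nonneg _) zero_le_one
      _ = (Lφ : ℝ) * h := one_mul _
  have hbound1 : |∫ y in O, D1 y ∂ρ| ≤ (Lφ : ℝ) * h * F := by
    have h2 := norm_integral_le_of_norm_le_const (μ := ρ.restrict O)
      (Filter.Eventually.of_forall hD1ptbd)
    rw [Real.norm_eq_abs] at h2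
    refine le_trans h2 ?_
    rw [measureReal_def, Measure.restrict_apply_univ]
    have h5 : ρ univ = ENNReal.ofReal F := by
      rw [hρeq, withDensity_apply _ MeasurableSet.univ, setLIntegral_univ,
        ← ofReal_integral_eq_lintegral_ofReal hfint (Filter.Eventually.of_forall hf)]
    have h3 : (ρ O).toReal ≤ F := by
      calc (ρ O).toReal ≤ (ρ univ).toReal :=
            ENNReal.toReal_mono (measure_ne_top ρ univ) (measure_mono (subset_univ O))
        _ = F := by rw [h5, ENNReal.toReal_ofReal hF0]
    exact mul_le_mul_of_nonneg_left h3 (by positivity)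
  -- bound for D2 : first the L¹ bound on the difference of mollified indicators
  have hΔm_meas : Measurable fun y =>
      mollInd2 ψε ψη K (w x') (y - x') - mollInd2 ψε ψη K (w x) (y - x) :=
    ((hm_meas (w x')).comp (measurable_id.sub measurable_const)).sub
      ((hm_meas (w x)).comp (measurable_id.sub measurable_const))
  have hJ : (∫ y in O, |mollInd2 ψε ψη K (w x') (y - x') - mollInd2 ψε ψη K (w x) (y - x)| ∂ρ)
      ≤ N.toReal * (C₅ * h) := by
    have hGmeas : Measurable fun y => ENNReal.ofReal
        |mollInd2 ψε ψη K (w x') (y - x') - mollInd2 ψε ψη K (w x) (y - x)| :=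
      ENNReal.measurable_ofReal.comp hΔm_meas.abs
    have heqJ : (∫ y in O, |mollInd2 ψε ψη K (w x') (y - x') -
        mollInd2 ψε ψη K (w x) (y - x)| ∂ρ) = (∫⁻ y in O, ENNReal.ofReal
        |mollInd2 ψε ψη K (w x') (y - x') - mollInd2 ψε ψη K (w x) (y - x)| ∂ρ).toReal :=
      integral_eq_lintegral_of_nonneg_ae (Filter.Eventually.of_forall fun y => abs_nonneg _)
        hΔm_meas.abs.aestronglyMeasurable
    rw [heqJ]
    have hres : ρ.restrict O = (volume.restrict O).withDensity (fun y => ENNReal.ofReal (f y)) := by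
      rw [hρeq, restrict_withDensity hOmeas]
    have hfae : AEMeasurable (fun y => ENNReal.ofReal (f y)) (volume.restrict O) :=
      ENNReal.measurable_ofReal.comp_aemeasurable hfint.1.aemeasurable.restrict
    have hlint : (∫⁻ y in O, ENNReal.ofReal
        |mollInd2 ψε ψη K (w x') (y - x') - mollInd2 ψε ψη K (w x) (y - x)| ∂ρ)
        ≤ N * ENNReal.ofReal (C₅ * h) := by
      rw [show (∫⁻ y in O, ENNReal.ofReal
          |mollInd2 ψε ψη K (w x') (y - x') - mollInd2 ψε ψη K (w x) (y - x)| ∂ρ) =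
          ∫⁻ y, ENNReal.ofReal |mollInd2 ψε ψη K (w x') (y - x') -
            mollInd2 ψε ψη K (w x) (y - x)| ∂(ρ.restrict O) from rfl]
      rw [hres, lintegral_withDensity_eq_lintegral_mul₀ hfae hGmeas.aemeasurable.restrict]
      have hfbd : ∀ᵐ y ∂(volume.restrict O), ENNReal.ofReal (f y) ≤ N := by
        apply ae_restrict_of_ae
        filter_upwards [ae_le_eLpNormEssSup (f := f) (μ := volume)] with y hy
        rw [← Real.enorm_eq_ofReal (hf y), hNdef, eLpNorm_exponent_top]
        exact hy
      calc (∫⁻ y, ((fun y => ENNReal.ofReal (f y)) * fun y => ENNReal.ofReal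
            |mollInd2 ψε ψη K (w x') (y - x') - mollInd2 ψε ψη K (w x) (y - x)|) y
            ∂(volume.restrict O))
          ≤ ∫⁻ y, N * ENNReal.ofReal |mollInd2 ψε ψη K (w x') (y - x') -
              mollInd2 ψε ψη K (w x) (y - x)| ∂(volume.restrict O) := by
            apply lintegral_mono_ae
            filter_upwards [hfbd] with y hy
            rw [Pi.mul_apply]
            exact mul_le_mul_left hy _
        _ = N * ∫⁻ y, ENNReal.ofReal |mollInd2 ψε ψη K (w x') (y - x') -
              mollInd2 ψε ψη K (w x) (y - x)| ∂(volume.restrict O) :=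
            lintegral_const_mul' _ _ hN
        _ ≤ N * ∫⁻ y, ENNReal.ofReal |mollInd2 ψε ψη K (w x') (y - x') -
              mollInd2 ψε ψη K (w x) (y - x)| ∂volume := by
            apply mul_le_mul_right
            exact setLIntegral_le_lintegral _ _
        _ ≤ N * ENNReal.ofReal (C₅ * h) := by
            apply mul_le_mul_right
            have htrans : (∫⁻ y, ENNReal.ofReal |mollInd2 ψε ψη K (w x') (y - x') -
                mollInd2 ψε ψη K (w x) (y - x)| ∂volume)
                = ∫⁻ z, ENNReal.ofReal |mollInd2 ψε ψη K (w x') (z - δ) -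
                  mollInd2 ψε ψη K (w x) z| ∂volume := by
              have h2 := lintegral_add_right_eq_self (μ := volume)
                (fun z => ENNReal.ofReal |mollInd2 ψε ψη K (w x') (z - δ) -
                  mollInd2 ψε ψη K (w x) z|) (-x)
              rw [← h2]
              apply lintegral_congr
              intro y
              have h1 : y - x' = (y + -x) - δ := by rw [hx'def]; module
              have h3 : y - x = y + -x := by module
              rw [h1, h3]
            rw [htrans]
            refine le_trans hkey (le_of_eq ?_)
            congr 1
            rw [hδnorm, hC₅def]; ring
    calc (∫⁻ y in O, ENNReal.ofReal |mollInd2 ψε ψη K (w x') (y - x') -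
          mollInd2 ψε ψη K (w x) (y - x)| ∂ρ).toReal
        ≤ (N * ENNReal.ofReal (C₅ * h)).toReal :=
          ENNReal.toReal_mono (ENNReal.mul_ne_top hN ENNReal.ofReal_ne_top) hlint
      _ = N.toReal * (C₅ * h) := by
          rw [ENNReal.toReal_mul, ENNReal.toReal_ofReal (by positivity)]
  have hbound2 : |∫ y in O, D2 y ∂ρ| ≤ Mφ * (N.toReal * (C₅ * h)) := by
    have habs : |∫ y in O, D2 y ∂ρ| ≤ ∫ y in O, |D2 y| ∂ρ := by
      simpa [Real.norm_eq_abs] using norm_integral_le_integral_norm (μ := ρ.restrict O)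
        (f := D2)
    have hintMabs : Integrable (fun y => Mφ * |mollInd2 ψε ψη K (w x') (y - x') -
        mollInd2 ψε ψη K (w x) (y - x)|) (ρ.restrict O) := by
      refine Integrable.mono' (integrable_const (Mφ * 2)) ?_ ?_
      · exact (hΔm_meas.abs.const_mul Mφ).aestronglyMeasurable
      · filter_upwards [] with y
        rw [Real.norm_eq_abs, abs_mul, abs_of_nonneg hMφ0, abs_abs]
        apply mul_le_mul_of_nonneg_left _ hMφ0
        calc |mollInd2 ψε ψη K (w x') (y - x') - mollInd2 ψε ψη K (w x) (y - x)|
            ≤ |mollInd2 ψε ψη K (w x') (y - x')| + |mollInd2 ψε ψη K (w x) (y - x)| :=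
              abs_sub _ _
          _ ≤ 1 + 1 := add_le_add (hm_abs _ _) (hm_abs _ _)
          _ = 2 := by norm_num
    have hmono : (∫ y in O, |D2 y| ∂ρ) ≤ ∫ y in O, Mφ * |mollInd2 ψε ψη K (w x') (y - x') -
        mollInd2 ψε ψη K (w x) (y - x)| ∂ρ := by
      apply integral_mono hD2int.abs hintMabs
      intro y
      rw [hD2def]
      simp only
      rw [abs_mul, mul_comm Mφ]
      exact mul_le_mul_of_nonneg_left (hgradiabs x y) (abs_nonneg _)
    refine le_trans habs (le_trans hmono ?_)
    rw [integral_const_mul]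
    exact mul_le_mul_of_nonneg_left hJ hMφ0
  -- conclusion
  have hgoal' : |velMoll gradφ K w ψε ψη O ρ x' i - velMoll gradφ K w ψε ψη O ρ x i| ≤
      ((Lφ : ℝ) + Mφ * C₅ + 1) * h * (F + N.toReal) := by
    rw [hsplit]
    refine le_trans (abs_add_le _ _) (le_trans (add_le_add hbound1 hbound2) ?_)
    nlinarith [mul_nonneg hh.le hF0, mul_nonneg hh.le hN'0, mul_nonneg hMφ0 hC₅pos.le,
      mul_nonneg (mul_nonneg hMφ0 hC₅pos.le) (mul_nonneg hh.le hN'0),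
      mul_nonneg hLφ0 (mul_nonneg hh.le hN'0),
      mul_nonneg (mul_nonneg hMφ0 hC₅pos.le) (mul_nonneg hh.le hF0),
      mul_nonneg hLφ0 (mul_nonneg hh.le hF0)]
  calc |velMoll gradφ K w φε φη O ρ x' i - velMoll gradφ K w φε φη O ρ x i|
      = |velMoll gradφ K w ψε ψη O ρ x' i - velMoll gradφ K w ψε ψη O ρ x i| := by
        rw [MollAux.velMoll_congr (K := K) hψεe hψηe, MollAux.velMoll_congr (K := K) hψεe hψηe]
    _ ≤ ((Lφ : ℝ) + Mφ * C₅ + 1) * h * (F + N.toReal) := hgoal'
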